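/- Consider the SDE da = (a - a³) dT + η dβ(T) with η > 0 and let a₀ be an initial value with |a₀| < η̄ where η̄ := δ / (2(1 + η)) for some δ ∈ (0, 1]. Suppose sup_{t∈[0,T]} |β(t)| ≤ η̄/2. Then |a(T')| ≤ (1 + η) η̄ e^{T'} < δ for all T' ∈ [0, T] with (1+η) η̄ e^{T} < δ. -/
import Mathlib


theorem attractor_stays_small
    (η δ T : ℝ) (hη : 0 < η) (hδ : δ ∈ Set.Ioc (0:ℝ) 1) (hT : 0 ≤ T)
    (a β : ℝ → ℝ) (ha : Continuous a) (hβ : Continuous β)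
    (hsde : ∀ T' ∈ Set.Icc (0:ℝ) T,
      a T' = a 0 + (∫ s in (0:ℝ)..T', (a s - (a s) ^ 3)) + η * β T')
    (ha0 : |a 0| < δ / (2 * (1 + η)))
    (hβsmall : ∀ t ∈ Set.Icc (0:ℝ) T, |β t| ≤ (δ / (2 * (1 + η))) / 2)
    (hend : (1 + η) * (δ / (2 * (1 + η))) * Real.exp T < δ) :
    ∀ T' ∈ Set.Icc (0:ℝ) T,
      |a T'| ≤ (1 + η) * (δ / (2 * (1 + η))) * Real.exp T' ∧
      (1 + η) * (δ / (2 * (1 + η))) * Real.exp T' < δ := by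
  obtain ⟨hδ0, hδ1⟩ := hδ
  set η' : ℝ := δ / (2 * (1 + η)) with hη'def
  have h1η : (0:ℝ) < 1 + η := by linarith
  have hη'pos : 0 < η' := div_pos hδ0 (by linarith)
  -- the drift is continuous
  have hcont : Continuous (fun s => a s - a s ^ 3) := by fun_prop
  -- the function g := a 0 + ∫₀ᵗ (a - a³)
  set g : ℝ → ℝ := fun t => a 0 + ∫ s in (0:ℝ)..t, (a s - a s ^ 3) with hgdef
  have hgderiv : ∀ x : ℝ, HasDerivAt g (a x - a x ^ 3) x := by
    intro x
    exact (intervalIntegral.integral_hasDerivAt_right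
      (hcont.intervalIntegrable _ _)
      (hcont.aestronglyMeasurable.stronglyMeasurableAtFilter)
      hcont.continuousAt).const_add (a 0)
  have hgcont : Continuous g :=
    continuous_iff_continuousAt.2 fun x => (hgderiv x).continuousAt
  have hg0 : g 0 = a 0 := by simp [hgdef]
  have hg_eq : ∀ t ∈ Set.Icc (0:ℝ) T, a t = g t + η * β t := by
    intro t ht
    have := hsde t ht
    simp only [hgdef]
    linarith
  -- the key Grönwall estimate
  have key : ∀ b ∈ Set.Icc (0:ℝ) T, (∀ s ∈ Set.Ico (0:ℝ) b, |a s| ≤ 1) →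
      ∀ x ∈ Set.Icc (0:ℝ) b, |a x| ≤ (1 + η) * η' * Real.exp x := by
    intro b hb hsmall
    have hgron := norm_le_gronwallBound_of_norm_deriv_right_le
      (f := g) (f' := fun x => a x - a x ^ 3) (δ := η') (K := 1) (ε := η * (η' / 2))
      (a := 0) (b := b) (hgcont.continuousOn)
      (fun x _ => (hgderiv x).hasDerivWithinAt)
      (by rw [Real.norm_eq_abs, hg0]; exact ha0.le)
      ?_
    · intro x hx
      have hxT : x ∈ Set.Icc (0:ℝ) T := ⟨hx.1, hx.2.trans hb.2⟩
      have hgx := hgron x hx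
      rw [Real.norm_eq_abs] at hgx
      rw [gronwallBound_of_K_ne_0 one_ne_zero] at hgx
      simp only [one_mul, div_one, sub_zero] at hgx
      have hax := hg_eq x hxT
      have hβx := hβsmall x hxT
      have h1 : |a x| ≤ |g x| + η * |β x| := by
        rw [hax]
        calc |g x + η * β x| ≤ |g x| + |η * β x| := abs_add_le _ _
          _ = |g x| + η * |β x| := by rw [abs_mul, abs_of_pos hη]
      have hex : (0:ℝ) < Real.exp x := Real.exp_pos x
      have h2 : |a x| ≤ η' * Real.exp x + η * (η' / 2) * Real.exp x := by
        nlinarith [mul_le_mul_of_nonneg_left hβx hη.le]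
      nlinarith [mul_pos hη'pos hex, mul_pos (mul_pos hη hη'pos) hex]
    · -- the derivative bound
      intro x hx
      have hxT : x ∈ Set.Icc (0:ℝ) T := ⟨hx.1, (hx.2.le).trans hb.2⟩
      have h1 : |a x| ≤ 1 := hsmall x hx
      have hβx := hβsmall x hxT
      have hax := hg_eq x hxT
      have hdrift : |a x - a x ^ 3| ≤ |a x| := by
        have : a x - a x ^ 3 = a x * (1 - a x ^ 2) := by ring
        rw [this, abs_mul]
        have hsq : a x ^ 2 ≤ 1 := by nlinarith [sq_abs (a x), abs_nonneg (a x)]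
        have hsq0 : (0:ℝ) ≤ a x ^ 2 := sq_nonneg _
        have : |1 - a x ^ 2| ≤ 1 := by rw [abs_le]; constructor <;> nlinarith
        nlinarith [abs_nonneg (a x)]
      have h2 : |a x| ≤ |g x| + η * (η' / 2) := by
        rw [hax]
        calc |g x + η * β x| ≤ |g x| + |η * β x| := abs_add_le _ _
          _ ≤ |g x| + η * (η' / 2) := by
              rw [abs_mul, abs_of_pos hη]
              nlinarith
      simp only [Real.norm_eq_abs, one_mul]
      linarith
  -- first show |a t| < δ on [0, T] by a continuity/bootstrap argument
  have hsmallδ : ∀ t ∈ Set.Icc (0:ℝ) T, |a t| < δ := by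
    by_contra hcon
    push_neg at hcon
    obtain ⟨t₁, ht₁, ht₁δ⟩ := hcon
    set B : Set ℝ := Set.Icc (0:ℝ) T ∩ {t | δ ≤ |a t|} with hBdef
    have hBclosed : IsClosed B :=
      isClosed_Icc.inter (isClosed_le continuous_const ha.abs)
    have hBne : B.Nonempty := ⟨t₁, ht₁, ht₁δ⟩
    have hBbdd : BddBelow B := ⟨0, fun x hx => hx.1.1⟩
    set t₀ := sInf B with ht₀def
    have ht₀B : t₀ ∈ B := hBclosed.csInf_mem hBne hBbdd
    have ht₀T : t₀ ∈ Set.Icc (0:ℝ) T := ht₀B.1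
    have hsmall : ∀ s ∈ Set.Ico (0:ℝ) t₀, |a s| ≤ 1 := by
      intro s hs
      have hsB : s ∉ B := fun h => absurd (csInf_le hBbdd h) (not_le.2 hs.2)
      have hsT : s ∈ Set.Icc (0:ℝ) T := ⟨hs.1, hs.2.le.trans ht₀T.2⟩
      have : ¬ δ ≤ |a s| := fun h => hsB ⟨hsT, h⟩
      linarith [not_le.1 this]
    have hbound := key t₀ ht₀T hsmall t₀ ⟨ht₀T.1, le_refl _⟩
    have hmono : (1 + η) * η' * Real.exp t₀ ≤ (1 + η) * η' * Real.exp T := by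
      exact mul_le_mul_of_nonneg_left (Real.exp_le_exp.2 ht₀T.2) (by positivity)
    have : |a t₀| < δ := by linarith
    exact absurd ht₀B.2 (not_le.2 this)
  -- now the main estimates
  intro T' hT'
  have hsmall1 : ∀ s ∈ Set.Ico (0:ℝ) T', |a s| ≤ 1 := by
    intro s hs
    have hsT : s ∈ Set.Icc (0:ℝ) T := ⟨hs.1, hs.2.le.trans hT'.2⟩
    linarith [hsmallδ s hsT]
  refine ⟨key T' hT' hsmall1 T' ⟨hT'.1, le_refl _⟩, ?_⟩
  have hmono : (1 + η) * η' * Real.exp T' ≤ (1 + η) * η' * Real.exp T := by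
    exact mul_le_mul_of_nonneg_left (Real.exp_le_exp.2 hT'.2) (by positivity)
  linarith
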